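/- The quantity y_k = ∑_{l=2}^∞ l·c(l,k) satisfies y_k = O(ln k / k^2); precisely, there is a constant C > 0 such that 0 ≤ y_k ≤ C·ln k / k^2 for all integers k ≥ 2. -/

import Mathlib

open scoped Classical

/-- The constants `c(l,k)`: `c(l,0) = c(0,k) = 0`,
`c(1,k) = (2k²+14k)/((k+1)(k+2)(k+3)(k+4))` for `k ≥ 1`, and for `l > 1`, `k > 0`,
`c(l,k) = c(l,k-1)·(l+k-1)/(2l+k+2) + c(l-1,k)·(l-1)/(2l+k+2)`. -/
noncomputable def c : ℕ → ℕ → ℝ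
  | _, 0 => 0
  | 0, _ => 0
  | 1, k + 1 =>
      (2 * ((k : ℝ) + 1) ^ 2 + 14 * ((k : ℝ) + 1)) /
        (((k : ℝ) + 2) * ((k : ℝ) + 3) * ((k : ℝ) + 4) * ((k : ℝ) + 5))
  | l + 2, k + 1 =>
      c (l + 2) k * ((l : ℝ) + (k : ℝ) + 2) / (2 * (l : ℝ) + (k : ℝ) + 7) +
      c (l + 1) (k + 1) * ((l : ℝ) + 1) / (2 * (l : ℝ) + (k : ℝ) + 7)
termination_by l k => (l, k)

/-!
Test the recurrence against the weights `α(l,k) = lk + l(l+1)(H_K - H_k)` (`dualWeight`), `H`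
the harmonic numbers. With `κ(l,k) = (2l+k+2)α(l,k) - lα(l+1,k)` (`lyapunovWeight`) one has
`κ(l,k) - (l+k)α(l,k+1) = l(l²+k)/(k+1) ≥ 0`, so after a telescoping in `l` the functional
`∑_{l≥2} κ(l,k)c(l,k)` grows from `k` to `k+1` by at most the source term `α(2,k+1)c(1,k+1)`.
At `k = K` the harmonic part of the weights vanishes and `κ(l,K) = lK(l+K+1) ≥ lK²`, hence
`K²y_K ≤ ∑_{j≤K} α(2,j)c(1,j) ≤ ∑_{j≤K} (2j + 6 ln K)·16/j² = O(ln K)`.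
-/

open Finset Real

lemma c_zero_right (l : ℕ) : c l 0 = 0 := by cases l <;> simp [c]

lemma c_one_succ (k : ℕ) : c 1 (k + 1) = (2 * ((k : ℝ) + 1) ^ 2 + 14 * ((k : ℝ) + 1)) /
    (((k : ℝ) + 2) * ((k : ℝ) + 3) * ((k : ℝ) + 4) * ((k : ℝ) + 5)) := by
  rw [c]

lemma c_add_two_succ_mul (t k : ℕ) : c (t + 2) (k + 1) * (2 * (t : ℝ) + k + 7) =
    c (t + 2) k * ((t : ℝ) + k + 2) + c (t + 1) (k + 1) * ((t : ℝ) + 1) := by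
  rw [c]
  field_simp

lemma c_nonneg (l k : ℕ) : 0 ≤ c l k := by
  induction l generalizing k with
  | zero => cases k <;> simp [c]
  | succ l ihl =>
    induction k with
    | zero => simp [c_zero_right]
    | succ k ihk =>
      rcases l with _ | l
      · rw [c_one_succ]; positivity
      · rw [c]
        have := ihl (k + 1)
        positivity

lemma c_one_succ_le (k : ℕ) : c 1 (k + 1) ≤ 16 / ((k : ℝ) + 1) ^ 2 := by
  rw [c_one_succ, div_le_div_iff₀ (by positivity) (by positivity)]
  have hk : (0 : ℝ) ≤ k := k.cast_nonneg
  nlinarith [pow_nonneg hk 2, pow_nonneg hk 3, pow_nonneg hk 4]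

lemma harmonic_mono : Monotone harmonic :=
  monotone_nat_of_le_succ fun n => by
    rw [harmonic_succ]
    exact le_add_of_nonneg_right (by positivity)

lemma harmonic_sub_le_log {k : ℕ} (hk : 1 ≤ k) (K : ℕ) :
    (harmonic K - harmonic k : ℝ) ≤ log K := by
  have : (1 : ℝ) ≤ harmonic k := by
    exact_mod_cast (show harmonic 1 = 1 by simp) ▸ harmonic_mono hk
  linarith [harmonic_le_one_add_log K]

lemma sum_range_inv_succ_sq_le_two (n : ℕ) : ∑ j ∈ range n, 1 / ((j : ℝ) + 1) ^ 2 ≤ 2 := by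
  have := sum_Ioo_inv_sq_le (α := ℝ) 0 (n + 1)
  rw [← Ico_succ_left_eq_Ioo, Order.succ_eq_add_one, sum_Ico_eq_sum_range] at this
  simpa [add_comm] using this

noncomputable def dualWeight (K l k : ℕ) : ℝ :=
  l * k + l * (l + 1) * (harmonic K - harmonic k : ℝ)

noncomputable def lyapunovWeight (K l k : ℕ) : ℝ :=
  (2 * l + k + 2) * dualWeight K l k - l * dualWeight K (l + 1) k

noncomputable def lyapunov (K L k : ℕ) : ℝ :=
  ∑ t ∈ range L, lyapunovWeight K (t + 2) k * c (t + 2) k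

section Weights

variable {K : ℕ}

lemma dualWeight_nonneg (l : ℕ) {k : ℕ} (hk : k ≤ K) : 0 ≤ dualWeight K l k := by
  have : 0 ≤ (harmonic K - harmonic k : ℝ) := sub_nonneg.2 (by exact_mod_cast harmonic_mono hk)
  unfold dualWeight
  positivity

lemma lyapunovWeight_eq (l k : ℕ) : lyapunovWeight K l k =
    l * k * (l + k + 1) + l * (l + 1) * (l + k) * (harmonic K - harmonic k : ℝ) := by
  unfold lyapunovWeight dualWeight
  push_cast
  ring

lemma lyapunovWeight_sub_dualWeight_succ (l k : ℕ) :
    lyapunovWeight K l k - (l + k) * dualWeight K l (k + 1) = l * (l ^ 2 + k) / (k + 1) := by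
  rw [lyapunovWeight_eq, dualWeight, harmonic_succ]
  push_cast
  field_simp
  ring

lemma add_mul_dualWeight_succ_le_lyapunovWeight (l k : ℕ) :
    (l + k) * dualWeight K l (k + 1) ≤ lyapunovWeight K l k := by
  have := lyapunovWeight_sub_dualWeight_succ (K := K) l k
  have : (0 : ℝ) ≤ l * (l ^ 2 + k) / (k + 1) := by positivity
  linarith

lemma mul_sq_le_lyapunovWeight_self (l : ℕ) : (l : ℝ) * K ^ 2 ≤ lyapunovWeight K l K := by
  rw [lyapunovWeight_eq, sub_self, mul_zero, add_zero]
  have : (0 : ℝ) ≤ l * K * (l + 1) := by positivity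
  nlinarith

end Weights

lemma lyapunov_succ_eq (K L k : ℕ) : lyapunov K L (k + 1) =
    ∑ t ∈ range L, dualWeight K (t + 2) (k + 1) * ((t + 2 + k) * c (t + 2) k) +
      (dualWeight K 2 (k + 1) * c 1 (k + 1) -
        (L + 1) * dualWeight K (L + 2) (k + 1) * c (L + 1) (k + 1)) := by
  set flux : ℕ → ℝ := fun t => (t + 1) * dualWeight K (t + 2) (k + 1) * c (t + 1) (k + 1)
  have hterm (t : ℕ) : lyapunovWeight K (t + 2) (k + 1) * c (t + 2) (k + 1) =
      dualWeight K (t + 2) (k + 1) * ((t + 2 + k) * c (t + 2) k) + (flux t - flux (t + 1)) := by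
    simp only [flux, lyapunovWeight]
    push_cast
    linear_combination dualWeight K (t + 2) (k + 1) * c_add_two_succ_mul t k
  rw [lyapunov, sum_congr rfl fun t _ => hterm t, sum_add_distrib, sum_range_sub']
  simp [flux]

lemma lyapunov_succ_le {K k : ℕ} (L : ℕ) (hk : k + 1 ≤ K) :
    lyapunov K L (k + 1) ≤ dualWeight K 2 (k + 1) * c 1 (k + 1) + lyapunov K L k := by
  have hbulk : ∑ t ∈ range L, dualWeight K (t + 2) (k + 1) * ((t + 2 + k) * c (t + 2) k) ≤
      lyapunov K L k := by
    refine sum_le_sum fun t _ => ?_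
    have := add_mul_dualWeight_succ_le_lyapunovWeight (K := K) (t + 2) k
    push_cast at this
    nlinarith [c_nonneg (t + 2) k]
  have houtflow : 0 ≤ (L + 1) * dualWeight K (L + 2) (k + 1) * c (L + 1) (k + 1) := by
    have := dualWeight_nonneg (L + 2) hk
    have := c_nonneg (L + 1) (k + 1)
    positivity
  rw [lyapunov_succ_eq]
  linarith

lemma lyapunov_le_sum_source {K k : ℕ} (L : ℕ) (hk : k ≤ K) :
    lyapunov K L k ≤ ∑ j ∈ range k, dualWeight K 2 (j + 1) * c 1 (j + 1) := by
  induction k with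
  | zero => simp [lyapunov, c_zero_right]
  | succ k ih =>
    rw [sum_range_succ]
    linarith [lyapunov_succ_le L hk, ih (by omega)]

lemma sq_mul_sum_le_lyapunov (K L : ℕ) :
    (K : ℝ) ^ 2 * ∑ t ∈ range L, ((t : ℝ) + 2) * c (t + 2) K ≤ lyapunov K L K := by
  rw [mul_sum]
  refine sum_le_sum fun t _ => ?_
  have := mul_sq_le_lyapunovWeight_self (K := K) (t + 2)
  push_cast at this
  nlinarith [c_nonneg (t + 2) K]

lemma sum_source_le {K : ℕ} (hK : 2 ≤ K) :
    ∑ j ∈ range K, dualWeight K 2 (j + 1) * c 1 (j + 1) ≤ 272 * log K := by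
  have hlog : 2 / 3 ≤ log K := by
    have := log_le_log (by norm_num) (show (2 : ℝ) ≤ K by exact_mod_cast hK)
    linarith [log_two_gt_d9]
  have hterm (j : ℕ) (hj : j < K) : dualWeight K 2 (j + 1) * c 1 (j + 1) ≤
      32 * (1 / ((j : ℝ) + 1)) + 96 * log K * (1 / ((j : ℝ) + 1) ^ 2) := by
    have hweight : dualWeight K 2 (j + 1) ≤ 2 * ((j : ℝ) + 1) + 6 * log K := by
      have := harmonic_sub_le_log (Nat.le_add_left 1 j) K
      simp only [dualWeight]
      push_cast
      linarith
    calc dualWeight K 2 (j + 1) * c 1 (j + 1)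
        ≤ (2 * ((j : ℝ) + 1) + 6 * log K) * (16 / ((j : ℝ) + 1) ^ 2) :=
          mul_le_mul hweight (c_one_succ_le j) (c_nonneg 1 (j + 1)) (by positivity)
      _ = _ := by field_simp; ring
  have hharmonic : ∑ j ∈ range K, 1 / ((j : ℝ) + 1) ≤ 1 + log K := by
    simpa [harmonic] using harmonic_le_one_add_log K
  calc ∑ j ∈ range K, dualWeight K 2 (j + 1) * c 1 (j + 1)
      ≤ ∑ j ∈ range K, (32 * (1 / ((j : ℝ) + 1)) + 96 * log K * (1 / ((j : ℝ) + 1) ^ 2)) :=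
        sum_le_sum fun j hj => hterm j (mem_range.1 hj)
    _ = 32 * ∑ j ∈ range K, 1 / ((j : ℝ) + 1) +
          96 * log K * ∑ j ∈ range K, 1 / ((j : ℝ) + 1) ^ 2 := by
        rw [sum_add_distrib, mul_sum, mul_sum]
    _ ≤ 32 * (1 + log K) + 96 * log K * 2 := by
        gcongr
        exact sum_range_inv_succ_sq_le_two K
    _ ≤ 272 * log K := by linarith

lemma sum_range_le_log_div_sq {K : ℕ} (hK : 2 ≤ K) (L : ℕ) :
    ∑ t ∈ range L, ((t : ℝ) + 2) * c (t + 2) K ≤ 272 * log K / (K : ℝ) ^ 2 := by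
  have hK2 : (0 : ℝ) < (K : ℝ) ^ 2 := by positivity
  rw [le_div_iff₀ hK2, mul_comm]
  exact (sq_mul_sum_le_lyapunov K L).trans
    ((lyapunov_le_sum_source L le_rfl).trans (sum_source_le hK))

/-- `y_k = ∑_{l=2}^∞ l·c(l,k)` is a convergent series and satisfies
`0 ≤ y_k ≤ C·ln k/k²` for an absolute constant `C > 0` and all `k ≥ 2`. -/
theorem y_bound :
    ∃ C : ℝ, 0 < C ∧ ∀ k : ℕ, 2 ≤ k →
      Summable (fun l : ℕ => ((l : ℝ) + 2) * c (l + 2) k) ∧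
      0 ≤ ∑' l : ℕ, ((l : ℝ) + 2) * c (l + 2) k ∧
      (∑' l : ℕ, ((l : ℝ) + 2) * c (l + 2) k) ≤ C * Real.log k / (k : ℝ) ^ 2 := by
  refine ⟨272, by norm_num, fun k hk => ?_⟩
  have hnonneg (l : ℕ) : 0 ≤ ((l : ℝ) + 2) * c (l + 2) k := by
    have := c_nonneg (l + 2) k
    positivity
  have hsummable := summable_of_sum_range_le hnonneg (sum_range_le_log_div_sq hk)
  exact ⟨hsummable, tsum_nonneg hnonneg,
    hsummable.tsum_le_of_sum_range_le (sum_range_le_log_div_sq hk)⟩
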